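/- Corollary 1 (cancellation of thermodynamic vorticity in Korteweg fluids): For a steady non-isentropic flow of a Korteweg fluid satisfying the steady momentum balance ρ (Dv)v = div T with T = −p̄ I − T^E, if at every point of B one has ϑ grad η − grad h = grad(ι² div(ρ ∂_gφ) + ∂_gφ·grad ι) − ι grad(v·grad Π − ∂_ιχ), then ω × v = 0 throughout B. -/

import Mathlib

noncomputable section

/-- Points of ℝ³. -/
abbrev V3 : Type := Fin 3 → ℝ

/-- Partial derivative ∂ᵢ of a scalar field on ℝ³. -/
def pd (i : Fin 3) (f : V3 → ℝ) (x : V3) : ℝ :=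
  fderiv ℝ f x (Pi.single i 1)

/-- Cross product on ℝ³. -/
def cross (a b : V3) : V3 :=
  ![a 1 * b 2 - a 2 * b 1,
    a 2 * b 0 - a 0 * b 2,
    a 0 * b 1 - a 1 * b 0]

/-- Curl of a vector field on ℝ³. -/
def curl (u : V3 → V3) (x : V3) : V3 :=
  ![pd 1 (fun y => u y 2) x - pd 2 (fun y => u y 1) x,
    pd 2 (fun y => u y 0) x - pd 0 (fun y => u y 2) x,
    pd 0 (fun y => u y 1) x - pd 1 (fun y => u y 0) x]

/-- A steady Korteweg fluid on an open set `B ⊆ ℝ³`: smooth fields `ρ > 0`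
(mass density), `η` (entropy), `v` (velocity), a smooth potential
`φ = φ(ι, g, η)` and a smooth kinetic co-energy `χ = χ(ι, ι̇)`. -/
structure KortewegFluid where
  B : Set V3
  hB : IsOpen B
  ρ : V3 → ℝ
  η : V3 → ℝ
  v : V3 → V3
  φ : ℝ × V3 × ℝ → ℝ
  χ : ℝ × ℝ → ℝ
  hρ : ContDiffOn ℝ (⊤ : ℕ∞) ρ B
  hη : ContDiffOn ℝ (⊤ : ℕ∞) η B
  hv : ContDiffOn ℝ (⊤ : ℕ∞) v B
  hφ : ContDiff ℝ (⊤ : ℕ∞) φ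
  hχ : ContDiff ℝ (⊤ : ℕ∞) χ
  hρpos : ∀ x ∈ B, 0 < ρ x

namespace KortewegFluid

variable (K : KortewegFluid)

/-- Specific volume `ι = 1/ρ`. -/
def ι (x : V3) : ℝ := (K.ρ x)⁻¹

/-- The point `(ι(x), grad ι(x), η(x))` at which `φ` and its partial
derivatives are evaluated. -/
def pt (x : V3) : ℝ × V3 × ℝ := (K.ι x, fun i => pd i K.ι x, K.η x)

/-- `∂_ιφ` evaluated along the fields. -/
def dφι (x : V3) : ℝ := fderiv ℝ K.φ (K.pt x) (1, 0, 0)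

/-- `∂_gφ` (vector of partial derivatives of `φ` w.r.t. the gradient slot)
evaluated along the fields. -/
def dφg (x : V3) : V3 := fun j => fderiv ℝ K.φ (K.pt x) (0, Pi.single j 1, 0)

/-- Temperature `ϑ = ∂_ηφ` evaluated along the fields. -/
def temp (x : V3) : ℝ := fderiv ℝ K.φ (K.pt x) (0, 0, 1)

/-- Convective rate `ι̇ = v · grad ι`. -/
def ιdot (x : V3) : ℝ := ∑ j, K.v x j * pd j K.ι x

/-- `∂_ιχ` evaluated along the fields. -/
def dχι (x : V3) : ℝ := fderiv ℝ K.χ (K.ι x, K.ιdot x) (1, 0)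

/-- The field `Π : x ↦ ∂_ι̇χ(ι(x), ι̇(x))`. -/
def Pi' (x : V3) : ℝ := fderiv ℝ K.χ (K.ι x, K.ιdot x) (0, 1)

/-- `div(ρ ∂_gφ)`. -/
def divρg (x : V3) : ℝ := ∑ j, pd j (fun y => K.ρ y * K.dφg y j) x

/-- Kinetic pressure `p̌ = ρι (v·grad Π) − ∂_ιχ`. -/
def pcheck (x : V3) : ℝ :=
  K.ρ x * K.ι x * (∑ j, K.v x j * pd j K.Pi' x) - K.dχι x

/-- Pressure `p̄ = −ρι ∂_ιφ + ι div(ρ ∂_gφ) − p̌`. -/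
def pbar (x : V3) : ℝ :=
  -(K.ρ x * K.ι x * K.dφι x) + K.ι x * K.divρg x - K.pcheck x

/-- Specific enthalpy `ξ = φ − ι ∂_ιφ − ∂_gφ · grad ι`. -/
def ξ (x : V3) : ℝ :=
  K.φ (K.pt x) - K.ι x * K.dφι x - ∑ j, K.dφg x j * pd j K.ι x

/-- Total enthalpy `h = (1/2)|v|² + ξ`. -/
def htot (x : V3) : ℝ := (1 / 2) * (∑ k, (K.v x k) ^ 2) + K.ξ x

/-- Korteweg stress `T^E = grad ι ⊗ ρ ∂_gφ`. -/
def TE (x : V3) (i j : Fin 3) : ℝ := pd i K.ι x * (K.ρ x * K.dφg x j)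

/-- Steady momentum balance `ρ (Dv)v = div T` with `T = −p̄ I − T^E`
(stated componentwise). -/
def MomentumBalance : Prop :=
  ∀ x ∈ K.B, ∀ i : Fin 3,
    K.ρ x * ∑ j, pd j (fun y => K.v y i) x * K.v x j
      = ∑ j, pd j (fun y => -(K.pbar y) * (if i = j then (1:ℝ) else 0) - K.TE y i j) x

end KortewegFluid

/-!
Since `ρι = 1`, the steady momentum balance reads
`ρ (Dv)v = grad ∂_ιφ − ι grad div(ρ∂_gφ) − 2 div(ρ∂_gφ) grad ι + grad(v·grad Π − ∂_ιχ)
  − ρ (Hess ι) ∂_gφ`,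
where the last term comes from `div T^E` and the symmetry of `Hess ι`. The chain rule for `φ`
along `(ι, grad ι, η)` gives `grad ξ = (Hess ι) ∂_gφ + ϑ grad η − ι grad ∂_ιφ − grad(∂_gφ·grad ι)`,
so after multiplication by `ρ` the hypothesis says that the right-hand side above equals
`ρ grad(|v|²/2)`. Hence `(Dv)v = grad(|v|²/2)`, and Lamb's identity
`(Dv)v − grad(|v|²/2) = ω × v` concludes.
-/

open scoped Topology ContDiff

lemma ContDiffAt.differentiableAt_of_infty {E F : Type*} [NormedAddCommGroup E] [NormedSpace ℝ E]
    [NormedAddCommGroup F] [NormedSpace ℝ F] {f : E → F} {x : E} (hf : ContDiffAt ℝ ∞ f x) :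
    DifferentiableAt ℝ f x :=
  hf.differentiableAt (by simp)

lemma ContinuousLinearMap.apply_prod_three (L : ℝ × V3 × ℝ →L[ℝ] ℝ) (a : ℝ) (b : V3) (c : ℝ) :
    L (a, b, c) = a * L (1, 0, 0) + ∑ j, b j * L (0, Pi.single j 1, 0) + c * L (0, 0, 1) := by
  have hb : (0, b, 0) = ∑ j, b j • ((0 : ℝ), (Pi.single j 1 : V3), (0 : ℝ)) := by
    ext k <;> simp [Prod.fst_sum, Prod.snd_sum, Pi.single_apply]
  have hsplit : (a, b, c) = a • ((1 : ℝ), (0 : V3), (0 : ℝ)) + (0, b, 0) + c • (0, 0, 1) := by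
    ext <;> simp
  rw [hsplit, hb, map_add, map_add, map_sum]
  simp only [map_smul, smul_eq_mul]

section PartialDerivative

variable {f g : V3 → ℝ} {x : V3}

lemma pd_congr (h : f =ᶠ[𝓝 x] g) (i : Fin 3) : pd i f x = pd i g x := by
  rw [pd, pd, h.fderiv_eq]

lemma pd_const (c : ℝ) (i : Fin 3) : pd i (fun _ => c) x = 0 := by
  simp [pd]

lemma pd_neg (i : Fin 3) : pd i (fun y => -f y) x = -pd i f x := by
  simp [pd, fderiv_fun_neg]

lemma pd_add (hf : DifferentiableAt ℝ f x) (hg : DifferentiableAt ℝ g x) (i : Fin 3) :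
    pd i (fun y => f y + g y) x = pd i f x + pd i g x := by
  simp [pd, fderiv_fun_add hf hg]

lemma pd_sub (hf : DifferentiableAt ℝ f x) (hg : DifferentiableAt ℝ g x) (i : Fin 3) :
    pd i (fun y => f y - g y) x = pd i f x - pd i g x := by
  simp [pd, fderiv_fun_sub hf hg]

lemma pd_mul (hf : DifferentiableAt ℝ f x) (hg : DifferentiableAt ℝ g x) (i : Fin 3) :
    pd i (fun y => f y * g y) x = f x * pd i g x + g x * pd i f x := by
  simp [pd, fderiv_fun_mul hf hg]

lemma pd_pow_two (hf : DifferentiableAt ℝ f x) (i : Fin 3) :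
    pd i (fun y => f y ^ 2) x = 2 * f x * pd i f x := by
  simp_rw [sq]
  rw [pd_mul hf hf]
  ring

lemma pd_const_mul (hf : DifferentiableAt ℝ f x) (c : ℝ) (i : Fin 3) :
    pd i (fun y => c * f y) x = c * pd i f x := by
  simp [pd, fderiv_const_mul hf c]

lemma pd_sum {α : Type*} {s : Finset α} {F : α → V3 → ℝ}
    (h : ∀ a ∈ s, DifferentiableAt ℝ (F a) x) (i : Fin 3) :
    pd i (fun y => ∑ a ∈ s, F a y) x = ∑ a ∈ s, pd i (F a) x := by
  simp [pd, fderiv_fun_sum h]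

lemma ContDiffAt.pd {m n : WithTop ℕ∞} (hf : ContDiffAt ℝ n f x) (hmn : m + 1 ≤ n)
    (i : Fin 3) : ContDiffAt ℝ m (fun y => pd i f y) x :=
  (hf.fderiv_right hmn).clm_apply contDiffAt_const

lemma pd_pd_eq_fderiv_fderiv (hf : DifferentiableAt ℝ (fderiv ℝ f) x) (i j : Fin 3) :
    pd i (fun y => pd j f y) x = fderiv ℝ (fderiv ℝ f) x (Pi.single i 1) (Pi.single j 1) := by
  simp [pd, fderiv_clm_apply hf (differentiableAt_const _)]

lemma pd_pd_comm {n : WithTop ℕ∞} (hf : ContDiffAt ℝ n f x) (hn : 2 ≤ n) (i j : Fin 3) :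
    pd i (fun y => pd j f y) x = pd j (fun y => pd i f y) x := by
  have hf' : DifferentiableAt ℝ (fderiv ℝ f) x :=
    (hf.fderiv_right (m := 1) hn).differentiableAt one_ne_zero
  rw [pd_pd_eq_fderiv_fderiv hf', pd_pd_eq_fderiv_fderiv hf']
  exact (hf.isSymmSndFDerivAt (by simpa using hn)).eq _ _

lemma pd_comp {E : Type*} [NormedAddCommGroup E] [NormedSpace ℝ E] {φ : E → ℝ} {F : V3 → E}
    (hφ : DifferentiableAt ℝ φ (F x)) (hF : DifferentiableAt ℝ F x) (i : Fin 3) :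
    pd i (fun y => φ (F y)) x = fderiv ℝ φ (F x) (fderiv ℝ F x (Pi.single i 1)) := by
  rw [pd, fderiv_fun_comp x hφ hF]
  rfl

lemma pd_comp_prod_three {φ : ℝ × V3 × ℝ → ℝ} {a c : V3 → ℝ} {b : V3 → V3}
    (hφ : DifferentiableAt ℝ φ (a x, b x, c x)) (ha : DifferentiableAt ℝ a x)
    (hb : ∀ j, DifferentiableAt ℝ (fun y => b y j) x) (hc : DifferentiableAt ℝ c x) (i : Fin 3) :
    pd i (fun y => φ (a y, b y, c y)) x
      = pd i a x * fderiv ℝ φ (a x, b x, c x) (1, 0, 0)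
        + ∑ j, pd i (fun y => b y j) x * fderiv ℝ φ (a x, b x, c x) (0, Pi.single j 1, 0)
        + pd i c x * fderiv ℝ φ (a x, b x, c x) (0, 0, 1) := by
  have hb' : DifferentiableAt ℝ b x := differentiableAt_pi.2 hb
  rw [pd_comp (F := fun y => (a y, b y, c y)) hφ (ha.prodMk (hb'.prodMk hc)),
    (ha.hasFDerivAt.prodMk (hb'.hasFDerivAt.prodMk hc.hasFDerivAt)).fderiv]
  simp only [ContinuousLinearMap.prod_apply, fderiv_pi hb]
  exact ContinuousLinearMap.apply_prod_three _ _ _ _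

end PartialDerivative

lemma cross_curl_self_apply (u : V3 → V3) (x : V3) (i : Fin 3) :
    cross (curl u x) (u x) i
      = ∑ j, pd j (fun y => u y i) x * u x j - ∑ k, u x k * pd i (fun y => u y k) x := by
  fin_cases i <;> simp [cross, curl, Fin.sum_univ_three] <;> ring

namespace KortewegFluid

variable (K : KortewegFluid) {x : V3}

lemma contDiffAt_ρ (hx : x ∈ K.B) : ContDiffAt ℝ ∞ K.ρ x :=
  K.hρ.contDiffAt (K.hB.mem_nhds hx)

lemma contDiffAt_η (hx : x ∈ K.B) : ContDiffAt ℝ ∞ K.η x :=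
  K.hη.contDiffAt (K.hB.mem_nhds hx)

lemma contDiffAt_v (hx : x ∈ K.B) (k : Fin 3) : ContDiffAt ℝ ∞ (fun y => K.v y k) x :=
  contDiffAt_pi.1 (K.hv.contDiffAt (K.hB.mem_nhds hx)) k

lemma contDiffAt_ι (hx : x ∈ K.B) : ContDiffAt ℝ ∞ K.ι x :=
  (K.contDiffAt_ρ hx).inv (K.hρpos x hx).ne'

lemma contDiffAt_pd_ι (hx : x ∈ K.B) (j : Fin 3) :
    ContDiffAt ℝ ∞ (fun y => pd j K.ι y) x :=
  (K.contDiffAt_ι hx).pd (by simp) j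

lemma contDiffAt_pt (hx : x ∈ K.B) : ContDiffAt ℝ ∞ K.pt x :=
  (K.contDiffAt_ι hx).prodMk
    ((contDiffAt_pi.2 (K.contDiffAt_pd_ι hx)).prodMk (K.contDiffAt_η hx))

lemma contDiffAt_dφι (hx : x ∈ K.B) : ContDiffAt ℝ ∞ K.dφι x :=
  ((K.hφ.fderiv_right (by simp)).contDiffAt.comp x (K.contDiffAt_pt hx)).clm_apply
    contDiffAt_const

lemma contDiffAt_dφg (hx : x ∈ K.B) (j : Fin 3) : ContDiffAt ℝ ∞ (fun y => K.dφg y j) x :=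
  ((K.hφ.fderiv_right (by simp)).contDiffAt.comp x (K.contDiffAt_pt hx)).clm_apply
    contDiffAt_const

lemma contDiffAt_ρ_mul_dφg (hx : x ∈ K.B) (j : Fin 3) :
    ContDiffAt ℝ ∞ (fun y => K.ρ y * K.dφg y j) x :=
  (K.contDiffAt_ρ hx).mul (K.contDiffAt_dφg hx j)

lemma contDiffAt_divρg (hx : x ∈ K.B) : ContDiffAt ℝ ∞ K.divρg x :=
  ContDiffAt.sum fun j _ => (K.contDiffAt_ρ_mul_dφg hx j).pd (by simp) j

lemma contDiffAt_dφg_dot_grad_ι (hx : x ∈ K.B) :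
    ContDiffAt ℝ ∞ (fun y => ∑ j, K.dφg y j * pd j K.ι y) x :=
  ContDiffAt.sum fun j _ => (K.contDiffAt_dφg hx j).mul (K.contDiffAt_pd_ι hx j)

lemma contDiffAt_ιdot (hx : x ∈ K.B) : ContDiffAt ℝ ∞ K.ιdot x :=
  ContDiffAt.sum fun j _ => (K.contDiffAt_v hx j).mul (K.contDiffAt_pd_ι hx j)

lemma contDiffAt_dχι (hx : x ∈ K.B) : ContDiffAt ℝ ∞ K.dχι x :=
  ((K.hχ.fderiv_right (by simp)).contDiffAt.comp x
    ((K.contDiffAt_ι hx).prodMk (K.contDiffAt_ιdot hx))).clm_apply contDiffAt_const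

lemma contDiffAt_Pi' (hx : x ∈ K.B) : ContDiffAt ℝ ∞ K.Pi' x :=
  ((K.hχ.fderiv_right (by simp)).contDiffAt.comp x
    ((K.contDiffAt_ι hx).prodMk (K.contDiffAt_ιdot hx))).clm_apply contDiffAt_const

lemma contDiffAt_v_dot_grad_Pi' (hx : x ∈ K.B) :
    ContDiffAt ℝ ∞ (fun y => ∑ j, K.v y j * pd j K.Pi' y) x :=
  ContDiffAt.sum fun j _ => (K.contDiffAt_v hx j).mul ((K.contDiffAt_Pi' hx).pd (by simp) j)

lemma contDiffAt_pbar (hx : x ∈ K.B) : ContDiffAt ℝ ∞ K.pbar x := by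
  have hρι := (K.contDiffAt_ρ hx).mul (K.contDiffAt_ι hx)
  exact ((hρι.mul (K.contDiffAt_dφι hx)).neg.add
    ((K.contDiffAt_ι hx).mul (K.contDiffAt_divρg hx))).sub
      ((hρι.mul (K.contDiffAt_v_dot_grad_Pi' hx)).sub (K.contDiffAt_dχι hx))

lemma ρ_mul_ι (hx : x ∈ K.B) : K.ρ x * K.ι x = 1 :=
  mul_inv_cancel₀ (K.hρpos x hx).ne'

lemma pbar_eq (hx : x ∈ K.B) :
    K.pbar x = -K.dφι x + K.ι x * K.divρg x - ((∑ j, K.v x j * pd j K.Pi' x) - K.dχι x) := by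
  simp only [pbar, pcheck, K.ρ_mul_ι hx, one_mul]

lemma pd_pbar (hx : x ∈ K.B) (i : Fin 3) :
    pd i K.pbar x = -pd i K.dφι x + K.ι x * pd i K.divρg x + K.divρg x * pd i K.ι x
      - pd i (fun y => (∑ j, K.v y j * pd j K.Pi' y) - K.dχι y) x := by
  have hι := (K.contDiffAt_ι hx).differentiableAt_of_infty
  have hdiv := (K.contDiffAt_divρg hx).differentiableAt_of_infty
  have hdφι := (K.contDiffAt_dφι hx).differentiableAt_of_infty
  have hkin :=
    ((K.contDiffAt_v_dot_grad_Pi' hx).sub (K.contDiffAt_dχι hx)).differentiableAt_of_infty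
  rw [pd_congr (Filter.eventually_of_mem (K.hB.mem_nhds hx) fun y hy => K.pbar_eq hy) i,
    pd_sub (by fun_prop) hkin, pd_add (by fun_prop) (by fun_prop), pd_neg, pd_mul hι hdiv]
  ring

lemma sum_pd_stress (hx : x ∈ K.B) (i : Fin 3) :
    ∑ j, pd j (fun y => -K.pbar y * (if i = j then (1 : ℝ) else 0) - K.TE y i j) x
      = -pd i K.pbar x - pd i K.ι x * K.divρg x
        - K.ρ x * ∑ j, K.dφg x j * pd i (fun y => pd j K.ι y) x := by
  have hterm (j : Fin 3) :
      pd j (fun y => -K.pbar y * (if i = j then (1 : ℝ) else 0) - K.TE y i j) x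
        = (if i = j then -pd i K.pbar x else 0) - pd i K.ι x * pd j (fun y => K.ρ y * K.dφg y j) x
          - K.ρ x * (K.dφg x j * pd i (fun y => pd j K.ι y) x) := by
    have hpdι := K.contDiffAt_pd_ι hx i
    have hF := K.contDiffAt_ρ_mul_dφg hx j
    unfold TE
    rw [pd_sub ((K.contDiffAt_pbar hx).neg.mul contDiffAt_const).differentiableAt_of_infty
        (hpdι.mul hF).differentiableAt_of_infty,
      pd_mul hpdι.differentiableAt_of_infty hF.differentiableAt_of_infty,
      pd_pd_comm (K.contDiffAt_ι hx) (WithTop.coe_le_coe.2 le_top) j i]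
    split_ifs with hij
    · subst hij
      simp only [mul_one, pd_neg]
      ring
    · simp only [mul_zero, pd_const]
      ring
  simp only [hterm, Finset.sum_sub_distrib, Finset.sum_ite_eq, Finset.mem_univ, if_true,
    ← Finset.mul_sum, divρg]

lemma pd_φ_pt (hx : x ∈ K.B) (i : Fin 3) :
    pd i (fun y => K.φ (K.pt y)) x
      = pd i K.ι x * K.dφι x + ∑ j, pd i (fun y => pd j K.ι y) x * K.dφg x j
        + pd i K.η x * K.temp x :=
  pd_comp_prod_three (K.hφ.differentiable (by simp) _)
    (K.contDiffAt_ι hx).differentiableAt_of_infty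
    (fun j => (K.contDiffAt_pd_ι hx j).differentiableAt_of_infty)
    (K.contDiffAt_η hx).differentiableAt_of_infty i

lemma pd_ξ (hx : x ∈ K.B) (i : Fin 3) :
    pd i K.ξ x
      = ∑ j, K.dφg x j * pd i (fun y => pd j K.ι y) x + K.temp x * pd i K.η x
        - K.ι x * pd i K.dφι x - pd i (fun y => ∑ j, K.dφg y j * pd j K.ι y) x := by
  have hφpt : DifferentiableAt ℝ (fun y => K.φ (K.pt y)) x :=
    (K.hφ.contDiffAt.comp x (K.contDiffAt_pt hx)).differentiableAt_of_infty
  have hι := (K.contDiffAt_ι hx).differentiableAt_of_infty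
  have hdφι := (K.contDiffAt_dφι hx).differentiableAt_of_infty
  have hG := (K.contDiffAt_dφg_dot_grad_ι hx).differentiableAt_of_infty
  rw [show K.ξ = fun y => K.φ (K.pt y) - K.ι y * K.dφι y - ∑ j, K.dφg y j * pd j K.ι y from rfl,
    pd_sub (by fun_prop) hG, pd_sub hφpt (by fun_prop), pd_mul hι hdφι, K.pd_φ_pt hx]
  simp only [mul_comm (pd i (fun y => pd _ K.ι y) x)]
  ring

lemma pd_htot (hx : x ∈ K.B) (i : Fin 3) :
    pd i K.htot x = ∑ k, K.v x k * pd i (fun y => K.v y k) x + pd i K.ξ x := by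
  have hv (k : Fin 3) := (K.contDiffAt_v hx k).differentiableAt_of_infty
  have hξ : DifferentiableAt ℝ K.ξ x :=
    (((K.hφ.contDiffAt.comp x (K.contDiffAt_pt hx)).sub
      ((K.contDiffAt_ι hx).mul (K.contDiffAt_dφι hx))).sub
        (K.contDiffAt_dφg_dot_grad_ι hx)).differentiableAt_of_infty
  rw [show K.htot = fun y => 1 / 2 * ∑ k, K.v y k ^ 2 + K.ξ y from rfl,
    pd_add (by fun_prop) hξ, pd_const_mul (by fun_prop), pd_sum fun k _ => by fun_prop]
  simp only [pd_pow_two (hv _), Finset.mul_sum]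
  ring_nf

lemma pd_ι_sq_mul_divρg_add (hx : x ∈ K.B) (i : Fin 3) :
    pd i (fun y => K.ι y ^ 2 * K.divρg y + ∑ j, K.dφg y j * pd j K.ι y) x
      = K.ι x ^ 2 * pd i K.divρg x + 2 * K.ι x * K.divρg x * pd i K.ι x
        + pd i (fun y => ∑ j, K.dφg y j * pd j K.ι y) x := by
  have hι := (K.contDiffAt_ι hx).differentiableAt_of_infty
  have hdiv := (K.contDiffAt_divρg hx).differentiableAt_of_infty
  rw [pd_add (by fun_prop) (K.contDiffAt_dφg_dot_grad_ι hx).differentiableAt_of_infty,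
    pd_mul (by fun_prop) hdiv, pd_pow_two hι]
  ring

end KortewegFluid

/-- Corollary 1, cancellation of thermodynamic vorticity:
for a steady non-isentropic flow of a Korteweg fluid satisfying the steady
momentum balance, if at every point of `B` one has
`ϑ grad η − grad h = grad(ι² div(ρ ∂_gφ) + ∂_gφ·grad ι) − ι grad(v·grad Π − ∂_ιχ)`,
then `ω × v = 0` throughout `B`. -/
theorem korteweg_cancellation_of_vorticity (K : KortewegFluid)
    (hbal : K.MomentumBalance)
    (hcancel : ∀ x ∈ K.B, ∀ i : Fin 3,
      K.temp x * pd i K.η x - pd i K.htot x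
        = pd i (fun y => (K.ι y) ^ 2 * K.divρg y + ∑ j, K.dφg y j * pd j K.ι y) x
          - K.ι x * pd i (fun y => (∑ j, K.v y j * pd j K.Pi' y) - K.dχι y) x) :
    ∀ x ∈ K.B, ∀ i : Fin 3, cross (curl K.v x) (K.v x) i = 0 := by
  intro x hx i
  have hmomentum := hbal x hx i
  rw [K.sum_pd_stress hx i, K.pd_pbar hx i] at hmomentum
  have henthalpy := hcancel x hx i
  rw [K.pd_htot hx i, K.pd_ξ hx i, K.pd_ι_sq_mul_divρg_add hx i] at henthalpy
  set kin := pd i (fun y => (∑ j, K.v y j * pd j K.Pi' y) - K.dχι y) x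
  have hkey : K.ρ x * cross (curl K.v x) (K.v x) i = 0 := by
    rw [cross_curl_self_apply]
    linear_combination hmomentum + K.ρ x * henthalpy + (-pd i K.dφι x + K.ι x * pd i K.divρg x
      + 2 * K.divρg x * pd i K.ι x - kin) * K.ρ_mul_ι hx
  exact (mul_eq_zero.1 hkey).resolve_left (K.hρpos x hx).ne'
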